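/- Fix l ≥ 2. For l-1 ≤ M < 2l-1 with N ≡ M mod 2, the weighted number of lattice paths from (0,0) to (M,N) subject to a type-1 filter at x=l-1 and a type-2 filter at x=2l-1 equals Σ_{k=0}^{⌊(N-l+1)/(2l)⌋} (-1)^k C(M+2kl,N) + Σ_{k=2}^{⌊N/(2l)+1⌋} (-1)^{k-1} C(M-2kl+2,N), where C(m,n) = binom(n,(n-m)/2). -/
import Mathlib


open Finset

/-- The x-coordinate after the first `k` steps of a path encoded by `s : Fin N → Bool`
(`true` = step `(x,y) → (x+1,y+1)`, `false` = step `(x,y) → (x-1,y+1)`), starting at `x = 0`. -/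
def pathPos {N : ℕ} (s : Fin N → Bool) (k : ℕ) : ℤ :=
  ∑ i ∈ Finset.univ.filter (fun i : Fin N => (i : ℕ) < k), (if s i then (1 : ℤ) else -1)

/-- Binomial coefficient `binom n k` with integer lower argument, `0` out of range. -/
def ibinom (n : ℕ) (k : ℤ) : ℤ :=
  if 0 ≤ k then (n.choose k.toNat : ℤ) else 0


/-- The weight of a path: the product over its steps of the weight of each step. -/
def pathWeight {N : ℕ} (w : ℤ → Bool → ℤ) (s : Fin N → Bool) : ℤ :=
  ∏ i : Fin N, w (pathPos s i.val) (s i)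

/-- `C m n = binom n ((n-m)/2)`, the number of unrestricted paths from `(0,0)` to `(m,n)`. -/
def C (m : ℤ) (n : ℕ) : ℤ := ibinom n (((n : ℤ) - m) / 2)

lemma ibinom_pascal (n : ℕ) (j : ℤ) : ibinom (n+1) j = ibinom n j + ibinom n (j-1) := by
  unfold ibinom
  rcases lt_trichotomy j 0 with h | h | h
  · rw [if_neg (by omega), if_neg (by omega), if_neg (by omega)]; ring
  · subst h; norm_num
  · rw [if_pos (by omega), if_pos (by omega), if_pos (by omega)]
    have h1 : j.toNat = (j-1).toNat + 1 := by omega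
    rw [h1, Nat.choose_succ_succ']
    push_cast; ring

lemma C_pascal (m : ℤ) (n : ℕ) (h : (2:ℤ) ∣ ((n:ℤ) + 1 - m)) :
    C m (n+1) = C (m-1) n + C (m+1) n := by
  obtain ⟨j, hj⟩ := h
  unfold C
  have e1 : (((n+1:ℕ):ℤ) - m) / 2 = j := by push_cast; omega
  have e2 : ((n:ℤ) - (m-1)) / 2 = j := by omega
  have e3 : ((n:ℤ) - (m+1)) / 2 = j - 1 := by omega
  rw [e1, e2, e3, ibinom_pascal]

lemma C_zero_of_gt (m : ℤ) (n : ℕ) (h2 : (2:ℤ) ∣ ((n:ℤ) - m)) (h : (n:ℤ) < m) : C m n = 0 := by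
  unfold C ibinom
  rw [if_neg (by omega)]

lemma C_zero_of_lt (m : ℤ) (n : ℕ) (h2 : (2:ℤ) ∣ ((n:ℤ) - m)) (h : m < -(n:ℤ)) : C m n = 0 := by
  unfold C ibinom
  rw [if_pos (by omega)]
  have h3 : n < (((n:ℤ) - m)/2).toNat := by omega
  rw [Nat.choose_eq_zero_of_lt h3]; norm_num

lemma C_symm (m : ℤ) (n : ℕ) (h2 : (2:ℤ) ∣ ((n:ℤ) - m)) : C m n = C (-m) n := by
  unfold C ibinom
  rw [show ((n:ℤ) - -m) = (n:ℤ) + m by ring]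
  rcases lt_trichotomy (((n:ℤ) - m)/2) 0 with h | h | h
  · -- m > n : LHS 0, RHS choose n big = 0
    rw [if_neg (by omega), if_pos (by omega)]
    have h3 : n < (((n:ℤ) + m)/2).toNat := by omega
    rw [Nat.choose_eq_zero_of_lt h3]; norm_num
  · -- m = n
    have hm : m = (n:ℤ) := by omega
    subst hm
    have e1 : ((n:ℤ) - n)/2 = 0 := by omega
    have e2 : ((n:ℤ) + n)/2 = (n:ℤ) := by omega
    rw [e1, e2, if_pos le_rfl, if_pos (by positivity)]
    simp [Nat.choose_self]
  · rw [if_pos (by omega)]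
    by_cases hle : (((n:ℤ) - m)/2).toNat ≤ n
    · rw [if_pos (by omega)]
      have h4 : (((n:ℤ) + m)/2).toNat = n - (((n:ℤ) - m)/2).toNat := by omega
      rw [h4, Nat.choose_symm hle]
    · -- m < -n : both zero
      rw [Nat.choose_eq_zero_of_lt (by omega)]
      rcases le_or_gt 0 (((n:ℤ) + m)/2) with h' | h'
      · rw [if_pos h', Nat.choose_eq_zero_of_lt (by omega)]
      · rw [if_neg (by omega)]; norm_num

/-- Tail sum `Σ_{k=0}^{N} (-1)^k C(x+2kl, N)`. -/
def D (l : ℕ) (x : ℤ) (N : ℕ) : ℤ :=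
  ∑ k ∈ Finset.range (N+1), (-1:ℤ)^k * C (x + 2*k*l) N

lemma C_shift_zero (l : ℕ) (hl : 2 ≤ l) (x : ℤ) (n k : ℕ) (hx : 0 ≤ x)
    (hp : (2:ℤ) ∣ ((n:ℤ) - x)) (hk : n < 4*k) : C (x + 2*(k:ℤ)*l) n = 0 := by
  apply C_zero_of_gt
  · have : (2:ℤ) ∣ 2*(k:ℤ)*l := ⟨(k:ℤ)*l, by ring⟩
    omega
  · have h1 : (n:ℤ) < 4*(k:ℤ) := by exact_mod_cast hk
    have h2 : (2:ℤ) ≤ (l:ℤ) := by exact_mod_cast hl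
    nlinarith

lemma D_pascal (l : ℕ) (hl : 2 ≤ l) (x : ℤ) (N : ℕ) (hx : 0 ≤ x)
    (hp : (2:ℤ) ∣ ((N:ℤ) + 1 - x)) :
    D l x (N+1) = D l (x-1) N + D l (x+1) N := by
  unfold D
  rw [Finset.sum_range_succ]
  have hz : C (x + 2*((N+1:ℕ):ℤ)*l) (N+1) = 0 := by
    apply C_shift_zero l hl x (N+1) (N+1) hx (by push_cast at hp ⊢; omega) (by omega)
  rw [hz, mul_zero, add_zero, ← Finset.sum_add_distrib]
  apply Finset.sum_congr rfl
  intro k hk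
  have hpar : (2:ℤ) ∣ (((N:ℤ)) + 1 - (x + 2*(k:ℤ)*l)) := by
    have : (2:ℤ) ∣ 2*(k:ℤ)*l := ⟨(k:ℤ)*l, by ring⟩
    omega
  rw [C_pascal _ _ hpar]
  rw [show x + 2*(k:ℤ)*l - 1 = (x-1) + 2*(k:ℤ)*l by ring,
      show x + 2*(k:ℤ)*l + 1 = (x+1) + 2*(k:ℤ)*l by ring]
  ring

lemma D_shift (l : ℕ) (hl : 2 ≤ l) (x : ℤ) (N : ℕ) (hx : 0 ≤ x)
    (hp : (2:ℤ) ∣ ((N:ℤ) - x)) :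
    D l x N + D l (x + 2*l) N = C x N := by
  have h1 : ∑ k ∈ Finset.range (N+2), (-1:ℤ)^k * C (x + 2*(k:ℤ)*l) N = D l x N := by
    rw [Finset.sum_range_succ]
    have hz : C (x + 2*((N+1:ℕ):ℤ)*l) N = 0 :=
      C_shift_zero l hl x N (N+1) hx hp (by omega)
    push_cast at hz ⊢
    rw [hz, mul_zero, add_zero]
    rfl
  have h2 : ∑ k ∈ Finset.range (N+2), (-1:ℤ)^k * C (x + 2*(k:ℤ)*l) N
      = C x N - D l (x + 2*l) N := by
    rw [Finset.sum_range_succ']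
    have hterm : ∀ k ∈ Finset.range (N+1), (-1:ℤ)^(k+1) * C (x + 2*((k+1:ℕ):ℤ)*l) N
        = -((-1:ℤ)^k * C ((x + 2*l) + 2*(k:ℤ)*l) N) := by
      intro k _
      have harg : x + 2*((k+1:ℕ):ℤ)*l = (x + 2*l) + 2*(k:ℤ)*l := by push_cast; ring
      rw [harg, pow_succ]
      ring
    rw [Finset.sum_congr rfl hterm]
    have h0 : (-1:ℤ)^0 * C (x + 2*((0:ℕ):ℤ)*l) N = C x N := by
      norm_num
    rw [h0]
    unfold D
    rw [Finset.sum_neg_distrib]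
    ring
  rw [h1] at h2
  linarith

lemma D_eq_zero (l : ℕ) (x : ℤ) (N : ℕ) (hx : (N:ℤ) < x)
    (hp : (2:ℤ) ∣ ((N:ℤ) - x)) : D l x N = 0 := by
  unfold D
  apply Finset.sum_eq_zero
  intro k _
  have hz : C (x + 2*(k:ℤ)*l) N = 0 := by
    apply C_zero_of_gt
    · have : (2:ℤ) ∣ 2*(k:ℤ)*l := ⟨(k:ℤ)*l, by ring⟩
      omega
    · have : (0:ℤ) ≤ 2*(k:ℤ)*l := by positivity
      omega
  rw [hz, mul_zero]

def Aw (l : ℕ) (y : ℤ) : ℤ := if y = 2*(l:ℤ)-1 then 2 else 1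

def Bw (l : ℕ) (y : ℤ) : ℤ :=
  if y = (l:ℤ)-1 ∨ y = 2*(l:ℤ)-1 then 0 else if y = (l:ℤ) ∨ y = 2*(l:ℤ) then 2 else 1

/-- The closed-form solution in the two regions `x ≤ l-2` and `l-1 ≤ x ≤ 2l-2`. -/
def Gf (l : ℕ) (x : ℤ) (N : ℕ) : ℤ :=
  if x ≤ (l:ℤ) - 2 then C x N - C (2*(l:ℤ)-2-x) N else D l x N - D l (4*(l:ℤ)-2-x) N

lemma G_zero (l : ℕ) (hl : 2 ≤ l) (x : ℤ) (hx : x ≤ 2*(l:ℤ)-2) (hp : (2:ℤ) ∣ x) :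
    Gf l x 0 = if x = 0 then 1 else 0 := by
  have hl' : (2:ℤ) ≤ (l:ℤ) := by exact_mod_cast hl
  unfold Gf
  by_cases h0 : x = 0
  · subst h0
    rw [if_pos (by omega), if_pos rfl]
    have hz : C (2*(l:ℤ)-2-0) 0 = 0 := C_zero_of_gt _ _ (by omega) (by omega)
    rw [hz]
    unfold C ibinom
    norm_num
  · rw [if_neg h0]
    by_cases h1 : x ≤ (l:ℤ) - 2
    · rw [if_pos h1]
      have hz1 : C x 0 = 0 := by
        rcases lt_trichotomy x 0 with h | h | h
        · exact C_zero_of_lt _ _ (by omega) (by omega)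
        · omega
        · exact C_zero_of_gt _ _ (by omega) (by omega)
      have hz2 : C (2*(l:ℤ)-2-x) 0 = 0 := C_zero_of_gt _ _ (by omega) (by omega)
      rw [hz1, hz2]; ring
    · rw [if_neg h1]
      have hz1 : D l x 0 = 0 := D_eq_zero _ _ _ (by omega) (by omega)
      have hz2 : D l (4*(l:ℤ)-2-x) 0 = 0 := D_eq_zero _ _ _ (by omega) (by omega)
      rw [hz1, hz2]; ring

lemma G_step (l : ℕ) (hl : 2 ≤ l) (N : ℕ) (x : ℤ) (hx : x ≤ 2*(l:ℤ)-2)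
    (hp : (2:ℤ) ∣ (x - ((N:ℤ)+1))) :
    Gf l x (N+1) = Aw l (x-1) * Gf l (x-1) N + Bw l (x+1) * Gf l (x+1) N := by
  have hl' : (2:ℤ) ≤ (l:ℤ) := by exact_mod_cast hl
  have hA : Aw l (x-1) = 1 := if_neg (by omega)
  rw [hA, one_mul]
  by_cases hc1 : x = 2*(l:ℤ)-2
  · -- absorbing wall below 2l-1
    have hB : Bw l (x+1) = 0 := if_pos (Or.inr (by omega))
    rw [hB, zero_mul, add_zero]
    subst hc1
    rw [show Gf l (2*(l:ℤ)-2) (N+1) = D l (2*(l:ℤ)-2) (N+1) - D l (2*(l:ℤ)) (N+1) by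
          unfold Gf; rw [if_neg (by omega)]; ring_nf,
        show Gf l (2*(l:ℤ)-2-1) N = D l (2*(l:ℤ)-3) N - D l (2*(l:ℤ)+1) N by
          unfold Gf; rw [if_neg (by omega)]; ring_nf]
    have hP1 := D_pascal l hl (2*(l:ℤ)-2) N (by omega) (by omega)
    have hP2 := D_pascal l hl (2*(l:ℤ)) N (by omega) (by omega)
    ring_nf at hP1 hP2 ⊢
    linarith
  · by_cases hc2 : x = (l:ℤ)-1
    · -- the type-1 filter boundary
      have hB : Bw l (x+1) = 2 := by
        unfold Bw; rw [if_neg (by omega), if_pos (Or.inl (by omega))]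
      rw [hB]
      subst hc2
      rw [show Gf l ((l:ℤ)-1) (N+1) = D l ((l:ℤ)-1) (N+1) - D l (3*(l:ℤ)-1) (N+1) by
            unfold Gf; rw [if_neg (by omega)]; ring_nf,
          show Gf l ((l:ℤ)-1-1) N = C ((l:ℤ)-2) N - C ((l:ℤ)) N by
            unfold Gf; rw [if_pos (by omega)]; ring_nf,
          show Gf l ((l:ℤ)-1+1) N = D l ((l:ℤ)) N - D l (3*(l:ℤ)-2) N by
            unfold Gf; rw [if_neg (by omega)]; ring_nf]
      have hP1 := D_pascal l hl ((l:ℤ)-1) N (by omega) (by omega)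
      have hP2 := D_pascal l hl (3*(l:ℤ)-1) N (by omega) (by omega)
      have hS1 := D_shift l hl ((l:ℤ)-2) N (by omega) (by omega)
      have hS2 := D_shift l hl ((l:ℤ)) N (by omega) (by omega)
      ring_nf at hP1 hP2 hS1 hS2 ⊢
      linarith
    · by_cases hc3 : x = (l:ℤ)-2
      · -- absorbing wall below l-1
        have hB : Bw l (x+1) = 0 := if_pos (Or.inl (by omega))
        rw [hB, zero_mul, add_zero]
        subst hc3
        rw [show Gf l ((l:ℤ)-2) (N+1) = C ((l:ℤ)-2) (N+1) - C ((l:ℤ)) (N+1) by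
              unfold Gf; rw [if_pos (by omega)]; ring_nf,
            show Gf l ((l:ℤ)-2-1) N = C ((l:ℤ)-3) N - C ((l:ℤ)+1) N by
              unfold Gf; rw [if_pos (by omega)]; ring_nf]
        have hP1 := C_pascal ((l:ℤ)-2) N (by omega)
        have hP2 := C_pascal ((l:ℤ)) N (by omega)
        ring_nf at hP1 hP2 ⊢
        linarith
      · by_cases hc4 : x ≤ (l:ℤ)-3
        · -- interior of region A
          have hB : Bw l (x+1) = 1 := by
            unfold Bw; rw [if_neg (by omega), if_neg (by omega)]
          rw [hB, one_mul]
          rw [show Gf l x (N+1) = C x (N+1) - C (2*(l:ℤ)-2-x) (N+1) by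
                unfold Gf; rw [if_pos (by omega)],
              show Gf l (x-1) N = C (x-1) N - C (2*(l:ℤ)-1-x) N by
                unfold Gf; rw [if_pos (by omega)]; ring_nf,
              show Gf l (x+1) N = C (x+1) N - C (2*(l:ℤ)-3-x) N by
                unfold Gf; rw [if_pos (by omega)]; ring_nf]
          have hP1 := C_pascal x N (by omega)
          have hP2 := C_pascal (2*(l:ℤ)-2-x) N (by omega)
          ring_nf at hP1 hP2 ⊢
          linarith
        · -- interior of region B : l ≤ x ≤ 2l-3
          have hxl : (l:ℤ) ≤ x := by omega
          have hB : Bw l (x+1) = 1 := by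
            unfold Bw; rw [if_neg (by omega), if_neg (by omega)]
          rw [hB, one_mul]
          rw [show Gf l x (N+1) = D l x (N+1) - D l (4*(l:ℤ)-2-x) (N+1) by
                unfold Gf; rw [if_neg (by omega)],
              show Gf l (x-1) N = D l (x-1) N - D l (4*(l:ℤ)-1-x) N by
                unfold Gf; rw [if_neg (by omega)]; ring_nf,
              show Gf l (x+1) N = D l (x+1) N - D l (4*(l:ℤ)-3-x) N by
                unfold Gf; rw [if_neg (by omega)]; ring_nf]
          have hP1 := D_pascal l hl x N (by omega) (by omega)
          have hP2 := D_pascal l hl (4*(l:ℤ)-2-x) N (by omega) (by omega)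
          ring_nf at hP1 hP2 ⊢
          linarith

def wl (l : ℕ) : ℤ → Bool → ℤ := fun x b =>
  if (x = (l : ℤ) ∧ b = false) ∨ (x = 2 * (l : ℤ) - 1 ∧ b = true) ∨
      (x = 2 * (l : ℤ) ∧ b = false) then 2 else 1

lemma pathPos_eq_sum_ite {N : ℕ} (s : Fin N → Bool) (k : ℕ) :
    pathPos s k = ∑ i : Fin N, if (i : ℕ) < k then (if s i then (1:ℤ) else -1) else 0 :=
  Finset.sum_filter _ _

lemma pathPos_snoc {N : ℕ} (t : Fin N → Bool) (b : Bool) (k : ℕ) (hk : k ≤ N) :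
    pathPos (Fin.snoc t b : Fin (N+1) → Bool) k = pathPos t k := by
  rw [pathPos_eq_sum_ite, pathPos_eq_sum_ite, Fin.sum_univ_castSucc]
  have hlast : ¬ ((Fin.last N : Fin (N+1)) : ℕ) < k := by
    simp [Fin.val_last]; omega
  rw [if_neg hlast, add_zero]
  apply Finset.sum_congr rfl
  intro i _
  simp [Fin.snoc_castSucc, Fin.coe_castSucc]

lemma pathPos_snoc_top {N : ℕ} (t : Fin N → Bool) (b : Bool) :
    pathPos (Fin.snoc t b : Fin (N+1) → Bool) (N+1)
      = pathPos t N + (if b then (1:ℤ) else -1) := by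
  rw [pathPos_eq_sum_ite, pathPos_eq_sum_ite, Fin.sum_univ_castSucc]
  have hlast : ((Fin.last N : Fin (N+1)) : ℕ) < N + 1 := by simp [Fin.val_last]
  rw [if_pos hlast]
  congr 1
  · apply Finset.sum_congr rfl
    intro i _
    have : ((i.castSucc : Fin (N+1)) : ℕ) < N + 1 := by
      simp [Fin.coe_castSucc]
    rw [if_pos this, if_pos (by omega : (i:ℕ) < N)]
    simp [Fin.snoc_castSucc]
  · simp [Fin.snoc_last]

lemma pathWeight_snoc {N : ℕ} (w : ℤ → Bool → ℤ) (t : Fin N → Bool) (b : Bool) :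
    pathWeight w (Fin.snoc t b : Fin (N+1) → Bool)
      = pathWeight w t * w (pathPos t N) b := by
  unfold pathWeight
  rw [Fin.prod_univ_castSucc]
  congr 1
  · apply Finset.prod_congr rfl
    intro i _
    rw [show ((i.castSucc : Fin (N+1)) : ℕ) = (i : ℕ) from rfl,
        pathPos_snoc t b i.val (by omega)]
    simp [Fin.snoc_castSucc]
  · rw [show ((Fin.last N : Fin (N+1)) : ℕ) = N from rfl,
        pathPos_snoc t b N le_rfl]
    simp [Fin.snoc_last]

lemma forall_snoc {N : ℕ} (P : ℤ → Bool → Prop) (t : Fin N → Bool) (b : Bool) :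
    (∀ i : Fin (N+1), P (pathPos (Fin.snoc t b : Fin (N+1) → Bool) i.val)
        ((Fin.snoc t b : Fin (N+1) → Bool) i)) ↔
      (∀ i : Fin N, P (pathPos t i.val) (t i)) ∧ P (pathPos t N) b := by
  constructor
  · intro h
    refine ⟨fun i => ?_, ?_⟩
    · have := h i.castSucc
      rwa [show ((i.castSucc : Fin (N+1)) : ℕ) = (i:ℕ) from rfl,
        pathPos_snoc t b i.val (by omega), Fin.snoc_castSucc] at this
    · have := h (Fin.last N)
      rwa [show ((Fin.last N : Fin (N+1)) : ℕ) = N from rfl,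
        pathPos_snoc t b N le_rfl, Fin.snoc_last] at this
  · rintro ⟨h1, h2⟩ i
    induction i using Fin.lastCases with
    | last =>
      rwa [show ((Fin.last N : Fin (N+1)) : ℕ) = N from rfl,
        pathPos_snoc t b N le_rfl, Fin.snoc_last]
    | cast i =>
      rw [show ((i.castSucc : Fin (N+1)) : ℕ) = (i:ℕ) from rfl,
        pathPos_snoc t b i.val (by omega), Fin.snoc_castSucc]
      exact h1 i

lemma pathPos_snoc_top_true {N : ℕ} (t : Fin N → Bool) :
    pathPos (Fin.snoc t true : Fin (N+1) → Bool) (N+1) = pathPos t N + 1 := by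
  rw [pathPos_snoc_top]; norm_num

lemma pathPos_snoc_top_false {N : ℕ} (t : Fin N → Bool) :
    pathPos (Fin.snoc t false : Fin (N+1) → Bool) (N+1) = pathPos t N - 1 := by
  rw [pathPos_snoc_top]; norm_num; ring

lemma forall_snoc_true {N : ℕ} (c : ℤ) (t : Fin N → Bool) :
    (∀ i : Fin (N+1), pathPos (Fin.snoc t true : Fin (N+1) → Bool) i.val = c →
        (Fin.snoc t true : Fin (N+1) → Bool) i = true) ↔
      (∀ i : Fin N, pathPos t i.val = c → t i = true) := by
  rw [forall_snoc (fun p b => p = c → b = true) t true]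
  simp

lemma forall_snoc_false {N : ℕ} (c : ℤ) (t : Fin N → Bool) :
    (∀ i : Fin (N+1), pathPos (Fin.snoc t false : Fin (N+1) → Bool) i.val = c →
        (Fin.snoc t false : Fin (N+1) → Bool) i = true) ↔
      ((∀ i : Fin N, pathPos t i.val = c → t i = true) ∧ ¬(pathPos t N = c)) := by
  rw [forall_snoc (fun p b => p = c → b = true) t false]
  simp

lemma wl_true (l : ℕ) (y : ℤ) : wl l y true = Aw l y := by
  unfold wl Aw
  by_cases h : y = 2*(l:ℤ)-1
  · rw [if_pos (Or.inr (Or.inl ⟨h, rfl⟩)), if_pos h]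
  · rw [if_neg (by simp [h]), if_neg h]

lemma wl_false (l : ℕ) (y : ℤ) (h : ¬(y = (l:ℤ)-1 ∨ y = 2*(l:ℤ)-1)) :
    wl l y false = Bw l y := by
  unfold wl Bw
  rw [if_neg h]
  by_cases h2 : y = (l:ℤ) ∨ y = 2*(l:ℤ)
  · rw [if_pos (by rcases h2 with h2 | h2; exacts [Or.inl ⟨h2, rfl⟩, Or.inr (Or.inr ⟨h2, rfl⟩)]),
      if_pos h2]
  · rw [if_neg (by simp at h2 ⊢; tauto), if_neg h2]

def snocEquiv (N : ℕ) : (Fin N → Bool) × Bool ≃ (Fin (N+1) → Bool) where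
  toFun p := Fin.snoc p.1 p.2
  invFun s := (fun i => s i.castSucc, s (Fin.last N))
  left_inv := by rintro ⟨t, b⟩; simp
  right_inv := by
    intro s; funext i
    induction i using Fin.lastCases with
    | last => simp
    | cast i => simp

open scoped Classical in
noncomputable def cnt (l N : ℕ) (x : ℤ) : ℤ :=
  ∑ s : Fin N → Bool,
    if (pathPos s N = x ∧
        (∀ i : Fin N, pathPos s i.val = (l:ℤ) - 1 → s i = true) ∧
        (∀ i : Fin N, pathPos s i.val = 2*(l:ℤ) - 1 → s i = true))
    then pathWeight (wl l) s else 0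

lemma cnt_zero (l : ℕ) (x : ℤ) : cnt l 0 x = if x = 0 then 1 else 0 := by
  unfold cnt
  have hs : ∀ s : Fin 0 → Bool,
      (if (pathPos s 0 = x ∧
          (∀ i : Fin 0, pathPos s i.val = (l:ℤ) - 1 → s i = true) ∧
          (∀ i : Fin 0, pathPos s i.val = 2*(l:ℤ) - 1 → s i = true))
        then pathWeight (wl l) s else 0) = if x = 0 then 1 else 0 := by
    intro s
    have h1 : pathPos s 0 = 0 := by
      unfold pathPos
      apply Finset.sum_eq_zero
      intro i _
      exact absurd i.isLt (by omega)
    have h2 : pathWeight (wl l) s = 1 := by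
      unfold pathWeight
      exact Finset.prod_of_isEmpty _
    rw [h1, h2]
    by_cases h : x = 0
    · subst h
      rw [if_pos ⟨rfl, fun i => absurd i.isLt (by omega), fun i => absurd i.isLt (by omega)⟩,
        if_pos rfl]
    · rw [if_neg (by tauto), if_neg h]
  rw [Finset.sum_congr rfl (fun s _ => hs s), Finset.sum_const]
  simp

lemma cnt_succ (l : ℕ) (hl : 2 ≤ l) (N : ℕ) (x : ℤ) :
    cnt l (N+1) x = Aw l (x-1) * cnt l N (x-1) + Bw l (x+1) * cnt l N (x+1) := by
  classical
  have hl' : (2:ℤ) ≤ (l:ℤ) := by exact_mod_cast hl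
  unfold cnt
  rw [← Equiv.sum_comp (snocEquiv N), Fintype.sum_prod_type]
  have key : ∀ t : Fin N → Bool,
      (∑ b : Bool, if (pathPos ((snocEquiv N) (t, b)) (N+1) = x ∧
          (∀ i : Fin (N+1), pathPos ((snocEquiv N) (t, b)) i.val = (l:ℤ) - 1 →
            (snocEquiv N) (t, b) i = true) ∧
          (∀ i : Fin (N+1), pathPos ((snocEquiv N) (t, b)) i.val = 2*(l:ℤ) - 1 →
            (snocEquiv N) (t, b) i = true))
        then pathWeight (wl l) ((snocEquiv N) (t, b)) else 0)
      = Aw l (x-1) * (if (pathPos t N = x - 1 ∧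
            (∀ i : Fin N, pathPos t i.val = (l:ℤ) - 1 → t i = true) ∧
            (∀ i : Fin N, pathPos t i.val = 2*(l:ℤ) - 1 → t i = true))
          then pathWeight (wl l) t else 0)
        + Bw l (x+1) * (if (pathPos t N = x + 1 ∧
            (∀ i : Fin N, pathPos t i.val = (l:ℤ) - 1 → t i = true) ∧
            (∀ i : Fin N, pathPos t i.val = 2*(l:ℤ) - 1 → t i = true))
          then pathWeight (wl l) t else 0) := by
    intro t
    rw [Fintype.sum_bool]
    have e1 : ∀ b, (snocEquiv N) (t, b) = (Fin.snoc t b : Fin (N+1) → Bool) := fun _ => rfl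
    simp only [e1]
    simp only [pathWeight_snoc, pathPos_snoc_top_true, pathPos_snoc_top_false,
      forall_snoc_true, forall_snoc_false]
    set W := pathWeight (wl l) t with hW
    set p := pathPos t N with hp0
    set Q1 := ∀ i : Fin N, pathPos t i.val = (l:ℤ) - 1 → t i = true with hQ1d
    set Q2 := ∀ i : Fin N, pathPos t i.val = 2*(l:ℤ) - 1 → t i = true with hQ2d
    by_cases hQ : Q1 ∧ Q2
    · obtain ⟨hQ1, hQ2⟩ := hQ
      by_cases hpt : p = x - 1
      · rw [if_pos (show p + 1 = x ∧ Q1 ∧ Q2 from ⟨by omega, hQ1, hQ2⟩),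
          if_neg (show ¬(p - 1 = x ∧ (Q1 ∧ ¬p = (l:ℤ)-1) ∧ (Q2 ∧ ¬p = 2*(l:ℤ)-1)) by
            rintro ⟨h, -⟩; omega),
          if_pos (show p = x - 1 ∧ Q1 ∧ Q2 from ⟨hpt, hQ1, hQ2⟩),
          if_neg (show ¬(p = x + 1 ∧ Q1 ∧ Q2) by rintro ⟨h, -⟩; omega)]
        rw [hpt, wl_true]
        ring
      · rw [if_neg (show ¬(p + 1 = x ∧ Q1 ∧ Q2) by rintro ⟨h, -⟩; omega),
          if_neg (show ¬(p = x - 1 ∧ Q1 ∧ Q2) by rintro ⟨h, -⟩; omega)]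
        by_cases hpf : p = x + 1
        · by_cases hb : x + 1 = (l:ℤ)-1 ∨ x + 1 = 2*(l:ℤ)-1
          · have hBw : Bw l (x+1) = 0 := if_pos hb
            rw [if_neg (show ¬(p - 1 = x ∧ (Q1 ∧ ¬p = (l:ℤ)-1) ∧ (Q2 ∧ ¬p = 2*(l:ℤ)-1)) by
                rintro ⟨-, ⟨-, h1⟩, ⟨-, h2⟩⟩; rcases hb with hb | hb <;> omega),
              if_pos (show p = x + 1 ∧ Q1 ∧ Q2 from ⟨hpf, hQ1, hQ2⟩), hBw]
            ring
          · have hb' := hb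
            push_neg at hb'
            rw [if_pos (show p - 1 = x ∧ (Q1 ∧ ¬p = (l:ℤ)-1) ∧ (Q2 ∧ ¬p = 2*(l:ℤ)-1) from
                  ⟨by omega, ⟨hQ1, by omega⟩, ⟨hQ2, by omega⟩⟩),
              if_pos (show p = x + 1 ∧ Q1 ∧ Q2 from ⟨hpf, hQ1, hQ2⟩)]
            rw [hpf, wl_false l (x+1) hb]
            ring
        · rw [if_neg (show ¬(p - 1 = x ∧ (Q1 ∧ ¬p = (l:ℤ)-1) ∧ (Q2 ∧ ¬p = 2*(l:ℤ)-1)) by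
              rintro ⟨h, -⟩; omega),
            if_neg (show ¬(p = x + 1 ∧ Q1 ∧ Q2) by rintro ⟨h, -⟩; omega)]
          ring
    · rw [if_neg (show ¬(p + 1 = x ∧ Q1 ∧ Q2) by rintro ⟨-, h1, h2⟩; exact hQ ⟨h1, h2⟩),
        if_neg (show ¬(p - 1 = x ∧ (Q1 ∧ ¬p = (l:ℤ)-1) ∧ (Q2 ∧ ¬p = 2*(l:ℤ)-1)) by
          rintro ⟨-, ⟨h1, -⟩, ⟨h2, -⟩⟩; exact hQ ⟨h1, h2⟩),
        if_neg (show ¬(p = x - 1 ∧ Q1 ∧ Q2) by rintro ⟨-, h1, h2⟩; exact hQ ⟨h1, h2⟩),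
        if_neg (show ¬(p = x + 1 ∧ Q1 ∧ Q2) by rintro ⟨-, h1, h2⟩; exact hQ ⟨h1, h2⟩)]
      ring
  rw [Finset.sum_congr rfl (fun t _ => key t), Finset.sum_add_distrib, ← Finset.mul_sum,
    ← Finset.mul_sum]

lemma cnt_eq_G (l : ℕ) (hl : 2 ≤ l) :
    ∀ (N : ℕ) (x : ℤ), x ≤ 2*(l:ℤ) - 2 → (2:ℤ) ∣ (x - N) → cnt l N x = Gf l x N := by
  intro N
  induction N with
  | zero =>
    intro x hx hp
    rw [cnt_zero, G_zero l hl x hx (by push_cast at hp; omega)]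
  | succ N ih =>
    intro x hx hp
    have hp' : (2:ℤ) ∣ (x - ((N:ℤ)+1)) := by push_cast at hp ⊢; omega
    rw [cnt_succ l hl N x, G_step l hl N x hx (by omega)]
    have hl' : (2:ℤ) ≤ (l:ℤ) := by exact_mod_cast hl
    by_cases hc : x = 2*(l:ℤ) - 2
    · have hBw : Bw l (x+1) = 0 := if_pos (Or.inr (by omega))
      rw [hBw, zero_mul, zero_mul, ih (x-1) (by omega) (by push_cast; omega)]
    · rw [ih (x-1) (by omega) (by push_cast; omega),
        ih (x+1) (by omega) (by push_cast; omega)]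

lemma sum_Icc_one (l M N : ℕ) (hl : 2 ≤ l) (hM1 : (l:ℤ) - 1 ≤ (M:ℤ))
    (hp : (2:ℤ) ∣ ((N:ℤ) - M)) :
    ∑ k ∈ Finset.Icc (0 : ℤ) (Int.fdiv ((N : ℤ) - l + 1) (2 * l)),
        (-1 : ℤ) ^ k.toNat * C ((M : ℤ) + 2 * k * l) N = D l M N := by
  have hl' : (2:ℤ) ≤ (l:ℤ) := by exact_mod_cast hl
  have h2l : (0:ℤ) < 2*(l:ℤ) := by omega
  set K1 := Int.fdiv ((N : ℤ) - l + 1) (2 * l) with hK1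
  have hKe : K1 = ((N : ℤ) - l + 1) / (2 * l) := Int.fdiv_eq_ediv_of_nonneg _ (by omega)
  have hb1 : K1 * (2*(l:ℤ)) ≤ (N:ℤ) - l + 1 := by
    rw [hKe]; exact Int.ediv_mul_le _ (by omega)
  have hb2 : (N:ℤ) - l + 1 < (K1 + 1) * (2*(l:ℤ)) := by
    rw [hKe]; exact Int.lt_ediv_add_one_mul_self _ h2l
  have hsub : Finset.Icc (0:ℤ) K1 ⊆ Finset.Icc (0:ℤ) (N:ℤ) := by
    intro k hk
    rw [Finset.mem_Icc] at hk ⊢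
    refine ⟨hk.1, ?_⟩
    nlinarith [hk.1, hk.2, hb1]
  have hzero : ∀ k ∈ Finset.Icc (0:ℤ) (N:ℤ), k ∉ Finset.Icc (0:ℤ) K1 →
      (-1 : ℤ) ^ k.toNat * C ((M : ℤ) + 2 * k * l) N = 0 := by
    intro k hk hk'
    rw [Finset.mem_Icc] at hk
    have hkK : K1 < k := by
      rw [Finset.mem_Icc] at hk'; omega
    have hCz : C ((M : ℤ) + 2 * k * l) N = 0 := by
      apply C_zero_of_gt
      · have : (2:ℤ) ∣ 2 * k * l := ⟨k*l, by ring⟩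
        omega
      · nlinarith [hk.1, hb2]
    rw [hCz, mul_zero]
  rw [Finset.sum_subset hsub hzero]
  unfold D
  apply Finset.sum_bij' (i := fun (k : ℤ) (_ : k ∈ Finset.Icc (0:ℤ) (N:ℤ)) => k.toNat)
    (j := fun (k : ℕ) (_ : k ∈ Finset.range (N+1)) => (k:ℤ))
  · intro a ha
    rw [Finset.mem_Icc] at ha
    rw [Finset.mem_range]
    omega
  · intro a ha
    rw [Finset.mem_range] at ha
    rw [Finset.mem_Icc]
    omega
  · intro a ha
    rw [Finset.mem_Icc] at ha
    omega
  · intro a _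
    omega
  · intro a ha
    rw [Finset.mem_Icc] at ha
    have : ((a.toNat : ℤ)) = a := by omega
    rw [this]

lemma sum_Icc_two (l M N : ℕ) (hl : 2 ≤ l) (hM1 : (l:ℤ) - 1 ≤ (M:ℤ)) (hM2 : (M:ℤ) ≤ 2*(l:ℤ)-2)
    (hp : (2:ℤ) ∣ ((N:ℤ) - M)) :
    ∑ k ∈ Finset.Icc (2 : ℤ) (Int.fdiv (N : ℤ) (2 * l) + 1),
        (-1 : ℤ) ^ (k - 1).toNat * C ((M : ℤ) - 2 * k * l + 2) N
      = - D l (4*(l:ℤ) - 2 - M) N := by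
  have hl' : (2:ℤ) ≤ (l:ℤ) := by exact_mod_cast hl
  have h2l : (0:ℤ) < 2*(l:ℤ) := by omega
  set K2 := Int.fdiv (N : ℤ) (2 * l) with hK2
  have hKe : K2 = (N : ℤ) / (2 * l) := Int.fdiv_eq_ediv_of_nonneg _ (by omega)
  have hK2nn : 0 ≤ K2 := by
    rw [hKe]; exact Int.ediv_nonneg (by omega) (by omega)
  have hb1 : K2 * (2*(l:ℤ)) ≤ (N:ℤ) := by
    rw [hKe]; exact Int.ediv_mul_le _ (by omega)
  have hb2 : (N:ℤ) < (K2 + 1) * (2*(l:ℤ)) := by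
    rw [hKe]; exact Int.lt_ediv_add_one_mul_self _ h2l
  have hsub : Finset.Icc (2:ℤ) (K2+1) ⊆ Finset.Icc (2:ℤ) ((N:ℤ)+2) := by
    intro k hk
    rw [Finset.mem_Icc] at hk ⊢
    refine ⟨hk.1, ?_⟩
    nlinarith [hk.1, hk.2, hb1, hK2nn]
  have hzero : ∀ k ∈ Finset.Icc (2:ℤ) ((N:ℤ)+2), k ∉ Finset.Icc (2:ℤ) (K2+1) →
      (-1 : ℤ) ^ (k - 1).toNat * C ((M : ℤ) - 2 * k * l + 2) N = 0 := by
    intro k hk hk'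
    rw [Finset.mem_Icc] at hk
    have hkK : K2 + 1 < k := by
      rw [Finset.mem_Icc] at hk'; omega
    have hCz : C ((M : ℤ) - 2 * k * l + 2) N = 0 := by
      apply C_zero_of_lt
      · have : (2:ℤ) ∣ 2 * k * l := ⟨k*l, by ring⟩
        omega
      · nlinarith [hk.1, hb2]
    rw [hCz, mul_zero]
  rw [Finset.sum_subset hsub hzero]
  have hstep : ∑ k ∈ Finset.Icc (2:ℤ) ((N:ℤ)+2),
      (-1 : ℤ) ^ (k - 1).toNat * C ((M : ℤ) - 2 * k * l + 2) N
      = ∑ j ∈ Finset.range (N+1), -((-1:ℤ)^j * C ((4*(l:ℤ) - 2 - M) + 2*j*l) N) := by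
    apply Finset.sum_bij' (i := fun (k : ℤ) (_ : k ∈ Finset.Icc (2:ℤ) ((N:ℤ)+2)) => (k-2).toNat)
      (j := fun (k : ℕ) (_ : k ∈ Finset.range (N+1)) => (k:ℤ)+2)
    · intro a ha
      rw [Finset.mem_Icc] at ha
      rw [Finset.mem_range]
      omega
    · intro a ha
      rw [Finset.mem_range] at ha
      rw [Finset.mem_Icc]
      omega
    · intro a ha
      rw [Finset.mem_Icc] at ha
      omega
    · intro a _
      omega
    · intro k hk
      rw [Finset.mem_Icc] at hk
      have hcast : (((k-2).toNat : ℤ)) = k - 2 := by omega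
      rw [hcast]
      have hpar : (2:ℤ) ∣ ((N:ℤ) - ((M : ℤ) - 2 * k * l + 2)) := by
        have : (2:ℤ) ∣ 2 * k * l := ⟨k*l, by ring⟩
        omega
      have harg : (4*(l:ℤ) - 2 - M) + 2*(k-2)*l = -((M : ℤ) - 2 * k * l + 2) := by ring
      rw [harg, ← C_symm _ _ hpar]
      have hexp : (k - 1).toNat = (k-2).toNat + 1 := by omega
      rw [hexp, pow_succ]
      ring
  rw [hstep, Finset.sum_neg_distrib]
  unfold D
  norm_num

lemma finsum_eq_cnt (l N : ℕ) (x : ℤ) :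
    (∑ᶠ s ∈ {s : Fin N → Bool |
        pathPos s N = x ∧
        (∀ i : Fin N, pathPos s i.val = (l : ℤ) - 1 → s i = true) ∧
        (∀ i : Fin N, pathPos s i.val = 2 * (l : ℤ) - 1 → s i = true)},
      pathWeight (wl l) s) = cnt l N x := by
  classical
  have hset : {s : Fin N → Bool |
      pathPos s N = x ∧
      (∀ i : Fin N, pathPos s i.val = (l : ℤ) - 1 → s i = true) ∧
      (∀ i : Fin N, pathPos s i.val = 2 * (l : ℤ) - 1 → s i = true)}
      = ↑(Finset.univ.filter (fun s : Fin N → Bool =>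
        pathPos s N = x ∧
        (∀ i : Fin N, pathPos s i.val = (l : ℤ) - 1 → s i = true) ∧
        (∀ i : Fin N, pathPos s i.val = 2 * (l : ℤ) - 1 → s i = true))) := by
    ext s
    simp
  rw [hset, finsum_mem_coe_finset, Finset.sum_filter]
  unfold cnt
  apply Finset.sum_congr rfl
  intro s _
  split_ifs with h1
  · rfl
  · rfl

/-- For `l ≥ 2` and `l-1 ≤ M < 2l-1`, the weighted number of lattice paths from `(0,0)` to
`(M,N)` with a type-1 filter at `x = l-1` and a type-2 filter at `x = 2l-1` equals
`Σ_{k=0}^{⌊(N-l+1)/(2l)⌋} (-1)^k C (M+2kl) N + Σ_{k=2}^{⌊N/(2l)+1⌋} (-1)^{k-1} C (M-2kl+2) N`. -/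
theorem two_filters_weighted_count (l M N : ℕ) (hl : 2 ≤ l)
    (hM1 : l - 1 ≤ M) (hM2 : M < 2 * l - 1) (h2 : N % 2 = M % 2) :
    (∑ᶠ s ∈ {s : Fin N → Bool |
        pathPos s N = M ∧
        (∀ i : Fin N, pathPos s i.val = (l : ℤ) - 1 → s i = true) ∧
        (∀ i : Fin N, pathPos s i.val = 2 * (l : ℤ) - 1 → s i = true)},
      pathWeight (fun x b =>
        if (x = (l : ℤ) ∧ b = false) ∨ (x = 2 * (l : ℤ) - 1 ∧ b = true) ∨
            (x = 2 * (l : ℤ) ∧ b = false) then 2 else 1) s) =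
      (∑ k ∈ Finset.Icc (0 : ℤ) (Int.fdiv ((N : ℤ) - l + 1) (2 * l)),
        (-1 : ℤ) ^ k.toNat * C ((M : ℤ) + 2 * k * l) N) +
      ∑ k ∈ Finset.Icc (2 : ℤ) (Int.fdiv (N : ℤ) (2 * l) + 1),
        (-1 : ℤ) ^ (k - 1).toNat * C ((M : ℤ) - 2 * k * l + 2) N := by
  classical
  have hl' : (2:ℤ) ≤ (l:ℤ) := by exact_mod_cast hl
  have hM1' : (l:ℤ) - 1 ≤ (M:ℤ) := by omega
  have hM2' : (M:ℤ) ≤ 2*(l:ℤ) - 2 := by omega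
  have hpar : (2:ℤ) ∣ ((N:ℤ) - (M:ℤ)) := by omega
  have hwl : (fun x b =>
      if (x = (l : ℤ) ∧ b = false) ∨ (x = 2 * (l : ℤ) - 1 ∧ b = true) ∨
          (x = 2 * (l : ℤ) ∧ b = false) then (2:ℤ) else 1) = wl l := rfl
  rw [hwl, finsum_eq_cnt l N (M:ℤ), cnt_eq_G l hl N (M:ℤ) hM2' (by omega)]
  unfold Gf
  rw [if_neg (by omega)]
  rw [sum_Icc_one l M N hl hM1' hpar, sum_Icc_two l M N hl hM1' hM2' hpar]
  ring
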